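/- Let n ≥ 3 be an integer and λ > 0 a real number with λ ≠ n and λ ≠ n+1. If f ∈ ℝ⁴ satisfies B(n,λ)·f = 0, then there exists h ∈ ℝ⁴ whose first and second components vanish such that M(n,λ)·h = f. -/

import Mathlib

open Matrix

/-- The indicial family `I(D Ric − Λ, λ)` (with `Λ = n`) of the linearized Einstein
operator on asymptotically de Sitter space, in the scalar block decomposition. -/
noncomputable def M (n : ℕ) (lam : ℝ) : Matrix (Fin 4) (Fin 4) ℝ :=
  (1 / 2 : ℝ) • !![(n : ℝ) * (lam - 2), 0, -(n : ℝ) * lam * (lam - 2), 0;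
                   0, 0, 0, 0;
                   2 * (n : ℝ) - lam, 0, lam * (lam - 2 * (n : ℝ)), 0;
                   0, 0, 0, lam * (lam - (n : ℝ))]

/-- The indicial family `I(δG, λ)` of the divergence composed with trace reversal,
in the scalar block decomposition. -/
noncomputable def B (n : ℕ) (lam : ℝ) : Matrix (Fin 2) (Fin 4) ℝ :=
  (1 / 2 : ℝ) • !![lam - 2 * (n : ℝ), 0, (n : ℝ) * (lam - 2), 0;
                   0, 2 * (lam - ((n : ℝ) + 1)), 0, 0]

/-!
On `h = (0, 0, x, y)` the first and third components of `M(n,λ) h` run over the line spanned by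
`(-n(λ-2), λ-2n)` and the fourth is `λ(λ-n) y/2`. The first row of `B(n,λ) f = 0` says that
`(f₀, f₂)` is orthogonal to `(λ-2n, n(λ-2))`, hence lies on that line as soon as this covector
is nonzero; it vanishes only at `n = 1, λ = 2 = n + 1`. The second row forces `f₁ = 0`.
-/

theorem exists_eq_neg_mul_and_eq_mul_of_mul_add_mul_eq_zero {K : Type*} [Field K]
    {a b u v : K} (hab : a ≠ 0 ∨ b ≠ 0) (h : a * u + b * v = 0) :
    ∃ t, u = -b * t ∧ v = a * t := by
  rcases hab with ha | hb
  · refine ⟨v / a, ?_, by field_simp⟩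
    field_simp
    linear_combination h
  · refine ⟨-u / b, by field_simp, ?_⟩
    rw [mul_div_assoc', eq_div_iff hb]
    linear_combination h

theorem M_mulVec_vec_zero_zero (n : ℕ) (lam x y : ℝ) :
    (M n lam).mulVec ![0, 0, x, y] =
      ![-((n : ℝ) * (lam - 2)) * (lam * x / 2), 0,
        (lam - 2 * (n : ℝ)) * (lam * x / 2), lam * (lam - (n : ℝ)) * y / 2] := by
  ext i
  fin_cases i <;> simp [M, mulVec, dotProduct, Fin.sum_univ_four] <;> ring

theorem B_mulVec (n : ℕ) (lam : ℝ) (f : Fin 4 → ℝ) :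
    (B n lam).mulVec f =
      ![((lam - 2 * (n : ℝ)) * f 0 + (n : ℝ) * (lam - 2) * f 2) / 2,
        (lam - ((n : ℝ) + 1)) * f 1] := by
  ext i
  fin_cases i <;> simp [B, mulVec, dotProduct, Fin.sum_univ_four]
  ring

theorem B_mulVec_eq_zero_iff (n : ℕ) (lam : ℝ) (f : Fin 4 → ℝ) :
    (B n lam).mulVec f = 0 ↔
      (lam - 2 * (n : ℝ)) * f 0 + (n : ℝ) * (lam - 2) * f 2 = 0 ∧
        (lam - ((n : ℝ) + 1)) * f 1 = 0 := by
  simp only [B_mulVec, funext_iff, Fin.forall_fin_two, Matrix.cons_val_zero,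
    Matrix.cons_val_one, Pi.zero_apply, div_eq_zero_iff, two_ne_zero, or_false]

theorem sub_two_mul_ne_zero_or_mul_sub_two_ne_zero {n lam : ℝ} (h₀ : lam ≠ 0)
    (h₁ : lam ≠ n + 1) : lam - 2 * n ≠ 0 ∨ n * (lam - 2) ≠ 0 := by
  by_contra! ⟨ha, hb⟩
  rcases mul_eq_zero.mp hb with hn | hlam
  · exact h₀ (by linarith)
  · exact h₁ (by linarith)

theorem solvability_linearized_einstein_general (n : ℕ) (lam : ℝ)
    (hpos : 0 < lam) (hne : lam ≠ (n : ℝ)) (hne' : lam ≠ (n : ℝ) + 1)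
    (f : Fin 4 → ℝ) (hf : (B n lam).mulVec f = 0) :
    ∃ h : Fin 4 → ℝ, h 0 = 0 ∧ h 1 = 0 ∧ (M n lam).mulVec h = f := by
  obtain ⟨hker, hf₁⟩ := (B_mulVec_eq_zero_iff n lam f).mp hf
  replace hf₁ : f 1 = 0 := (mul_eq_zero.mp hf₁).resolve_left (sub_ne_zero.mpr hne')
  obtain ⟨t, hf₀, hf₂⟩ := exists_eq_neg_mul_and_eq_mul_of_mul_add_mul_eq_zero
    (sub_two_mul_ne_zero_or_mul_sub_two_ne_zero hpos.ne' hne') hker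
  have hx : lam * (2 * t / lam) / 2 = t := by field_simp [hpos.ne']
  have hy : lam * (lam - n) * (2 * f 3 / (lam * (lam - n))) / 2 = f 3 := by
    field_simp [hpos.ne', sub_ne_zero.mpr hne]
  refine ⟨![0, 0, 2 * t / lam, 2 * f 3 / (lam * (lam - n))], rfl, rfl, ?_⟩
  rw [M_mulVec_vec_zero_zero, hx, hy]
  ext i
  fin_cases i <;> simp [hf₀, hf₁, hf₂]

/-- Solvability of the linearized Einstein equation at a non-exceptional indicial
weight: if `λ > 0`, `λ ∉ {n, n+1}` and `B(n,λ)f = 0`, then `f = M(n,λ)h` for some `h`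
whose first two components vanish. -/
theorem solvability_linearized_einstein (n : ℕ) (hn : 3 ≤ n) (lam : ℝ)
    (hpos : 0 < lam) (hne : lam ≠ (n : ℝ)) (hne' : lam ≠ (n : ℝ) + 1)
    (f : Fin 4 → ℝ) (hf : (B n lam).mulVec f = 0) :
    ∃ h : Fin 4 → ℝ, h 0 = 0 ∧ h 1 = 0 ∧ (M n lam).mulVec h = f :=
  solvability_linearized_einstein_general n lam hpos hne hne' f hf
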